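/- Let d ≥ 2, α ∈ (0,1], m > 1, and let f belong to the unit ball of the mixed Hölder–Nikolskii space with zero boundary values on [0,1]^d. For k̄ = (k_2,...,k_d) ∈ ℕ_0^{d-1} and s̄ ∈ Z(k̄), define the univariate function K_{k̄,s̄}(f)(x_1) = ∏_{j=2}^d ( -(1/2) 2^{α(k_j+1)} Δ²_{2^{-k_j-1}} f(x_1, 2^{-k̄}s̄) ), where the second difference is applied in the j-th variable. Then K_{k̄,s̄}(f) lies in the unit ball of H^α_∞([0,1]) with zero boundary values, i.e. |K_{k̄,s̄}(f)(x+h) - K_{k̄,s̄}(f)(x)| ≤ h^α for all admissible x, h ≥ 0. -/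

import Mathlib

/-- The mixed Hölder condition `|Δ_{h,u} f(x)| ≤ ∏_{i∈u} h_i^α` on `[0,1]^d`. -/
def MixHolder (d : ℕ) (α : ℝ) (f : (Fin d → ℝ) → ℝ) : Prop :=
  ∀ u : Finset (Fin d), u.Nonempty → ∀ x h : Fin d → ℝ,
    (∀ i, 0 ≤ h i) → (∀ i, 0 ≤ x i) →
    (∀ i, x i + (if i ∈ u then h i else 0) ≤ 1) →
    |∑ v ∈ u.powerset, (-1 : ℝ) ^ (u.card - v.card) *
        f (fun i => x i + if i ∈ v then h i else 0)| ≤ ∏ i ∈ u, h i ^ α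

/-- Unit ball of the mixed Hölder–Nikolskii space with zero boundary values. -/
def UnitBallH (d : ℕ) (α : ℝ) (f : (Fin d → ℝ) → ℝ) : Prop :=
  ContinuousOn f (Set.Icc 0 1) ∧
  (∀ x ∈ Set.Icc (0 : Fin d → ℝ) 1, |f x| ≤ 1) ∧
  (∀ x ∈ Set.Icc (0 : Fin d → ℝ) 1, (∃ i, x i = 0 ∨ x i = 1) → f x = 0) ∧
  MixHolder d α f

/-- For a function of `d = e + 1` variables, the univariate function
`K_{k̄,s̄}(f)(x₁) = ∏_{j=2}^d ( -(1/2) 2^{α(k_j+1)} Δ²_{2^{-k_j-1}} f(x₁, 2^{-k̄}s̄) )`,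
written via the expansion of the `e`-fold second difference in the last `e` variables. -/
noncomputable def Kfun (e : ℕ) (α : ℝ) (f : (Fin (e + 1) → ℝ) → ℝ) (kb : Fin e → ℕ)
    (sb : (j : Fin e) → Fin (2 ^ kb j)) (x1 : ℝ) : ℝ :=
  (-(1 : ℝ) / 2) ^ e * (∏ j, (2 : ℝ) ^ (α * ((kb j : ℝ) + 1))) *
    ∑ ε : Fin e → Fin 3, (∏ j, (![(1 : ℝ), -2, 1]) (ε j)) *
      f (Fin.cons x1 fun j =>
        (2 : ℝ) ^ (-(kb j : ℝ)) * (sb j : ℝ) + (ε j : ℝ) * (2 : ℝ) ^ (-(kb j : ℝ) - 1))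

/-!
Write `δ_j = 2^{-k_j-1}` and `b_j = 2^{-k_j} s_j`. A second difference with step `δ_j` in the
variable `y_j` is the difference of the first differences at `b_j + δ_j` and at `b_j`; expanding
all of them, `K(x+h) - K(x)` becomes a signed sum of `2^e` full mixed first differences of `f` with
steps `(h, δ)`, each at most `h^α ∏ δ_j^α` by the mixed Hölder condition. The normalisation
`2^{-e} ∏ δ_j^{-α}` in `K` cancels this exactly. `K` vanishes at `0` and `1` because `f` vanishes
on the faces `x₁ = 0` and `x₁ = 1`.
-/

open Finset

section MixedDifferences

variable {ι : Type*} [Fintype ι]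

def boolSign (b : Bool) : ℝ := if b then 1 else -1

theorem abs_boolSign (b : Bool) : |boolSign b| = 1 := by
  cases b <;> simp [boolSign]

theorem prod_boolSign (w : ι → Bool) :
    ∏ i, boolSign (w i) = (-1 : ℝ) ^ (Fintype.card ι - #{i | w i}) := by
  have hcard := Finset.card_filter_add_card_filter_not (s := univ) (fun i => w i = true)
  simp only [Bool.not_eq_true, card_univ] at hcard
  simp [boolSign, Finset.prod_ite, ← hcard]

def pairCount (q : Bool × Bool) : Fin 3 :=
  ⟨q.1.toNat + q.2.toNat, by cases q.1 <;> cases q.2 <;> decide⟩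

theorem sum_boolSign_mul_boolSign_of_pairCount_eq (k : Fin 3) :
    ∑ q : Bool × Bool with pairCount q = k, boolSign q.1 * boolSign q.2 =
      ![(1 : ℝ), -2, 1] k := by
  fin_cases k <;>
    norm_num [Finset.sum_filter, Fintype.sum_prod_type, pairCount, boolSign, Fin.ext_iff]

variable [DecidableEq ι]

theorem sum_prod_mul_comp_eq {α β R : Type*} [Fintype α] [Fintype β] [DecidableEq β]
    [CommSemiring R] (φ : α → β) (w : α → R) (G : (ι → β) → R) :
    ∑ p : ι → α, (∏ i, w (p i)) * G (φ ∘ p) =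
      ∑ q : ι → β, (∏ i, ∑ a with φ a = q i, w a) * G q := by
  rw [← Finset.sum_fiberwise univ (fun p : ι → α => φ ∘ p)]
  refine Fintype.sum_congr _ _ fun q => ?_
  have hfiber : ({p : ι → α | φ ∘ p = q} : Finset _) =
      Fintype.piFinset fun i => ({a | φ a = q i} : Finset α) := by
    ext p
    simp [funext_iff]
  rw [Finset.sum_congr rfl fun p hp => by rw [(Finset.mem_filter.1 hp).2], ← Finset.sum_mul,
    hfiber, Finset.prod_univ_sum]

def mixedDiff (g : (ι → ℝ) → ℝ) (x h : ι → ℝ) : ℝ :=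
  ∑ w : ι → Bool, (∏ i, boolSign (w i)) * g (fun i => x i + if w i then h i else 0)

def mixedSecondDiff (g : (ι → ℝ) → ℝ) (x h : ι → ℝ) : ℝ :=
  ∑ ε : ι → Fin 3, (∏ i, ![(1 : ℝ), -2, 1] (ε i)) * g (fun i => x i + (ε i : ℝ) * h i)

theorem mixedDiff_eq_sum_powerset (g : (ι → ℝ) → ℝ) (x h : ι → ℝ) :
    mixedDiff g x h = ∑ v ∈ (univ : Finset ι).powerset,
      (-1 : ℝ) ^ ((univ : Finset ι).card - v.card) *
        g (fun i => x i + if i ∈ v then h i else 0) :=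
  Finset.sum_nbij' (fun w => ({i | w i} : Finset ι)) (fun v i => decide (i ∈ v)) (by simp)
    (by simp) (fun w _ => by funext i; simp) (fun v _ => by ext i; simp)
    fun w _ => by simp [prod_boolSign]

theorem mixedDiff_sub (g₁ g₂ : (ι → ℝ) → ℝ) (x h : ι → ℝ) :
    mixedDiff (fun y => g₁ y - g₂ y) x h = mixedDiff g₁ x h - mixedDiff g₂ x h := by
  simp only [mixedDiff, mul_sub, Finset.sum_sub_distrib]

theorem mixedSecondDiff_sub (g₁ g₂ : (ι → ℝ) → ℝ) (x h : ι → ℝ) :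
    mixedSecondDiff (fun y => g₁ y - g₂ y) x h =
      mixedSecondDiff g₁ x h - mixedSecondDiff g₂ x h := by
  simp only [mixedSecondDiff, mul_sub, Finset.sum_sub_distrib]

theorem mixedDiff_cons {n : ℕ} (f : (Fin (n + 1) → ℝ) → ℝ) (x h : ℝ) (y δ : Fin n → ℝ) :
    mixedDiff f (Fin.cons x y) (Fin.cons h δ) =
      mixedDiff (fun z => f (Fin.cons (x + h) z)) y δ -
        mixedDiff (fun z => f (Fin.cons x z)) y δ := by
  rw [mixedDiff, ← (Fin.consEquiv fun _ : Fin (n + 1) => Bool).sum_comp (M := ℝ),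
    Fintype.sum_prod_type, Fintype.sum_bool, mixedDiff, mixedDiff, sub_eq_add_neg,
    ← Finset.sum_neg_distrib, ← Finset.sum_add_distrib, ← Finset.sum_add_distrib]
  refine Finset.sum_congr rfl fun τ _ => ?_
  have hcons : ∀ b : Bool, (Fin.consEquiv fun _ : Fin (n + 1) => Bool) (b, τ) = Fin.cons b τ :=
    fun _ => rfl
  have hpoint : ∀ b : Bool, (fun i => (Fin.cons x y : Fin (n + 1) → ℝ) i +
      if (Fin.cons b τ : Fin (n + 1) → Bool) i then (Fin.cons h δ : Fin (n + 1) → ℝ) i else 0) =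
      Fin.cons (x + if b then h else 0) fun j => y j + if τ j then δ j else 0 := by
    intro b
    funext i
    refine Fin.cases ?_ (fun j => ?_) i <;> simp
  simp only [hcons, hpoint, Fin.prod_univ_succ, Fin.cons_zero, Fin.cons_succ]
  simp [boolSign]

/-- The weights `1, -2, 1` of `Δ²` are the convolution of the weights `-1, 1` of `Δ` with
themselves. -/
theorem mixedSecondDiff_eq_sum_mixedDiff (g : (ι → ℝ) → ℝ) (x h : ι → ℝ) :
    mixedSecondDiff g x h =
      ∑ σ : ι → Bool, (∏ i, boolSign (σ i)) *
        mixedDiff g (fun i => x i + if σ i then h i else 0) h := by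
  simp only [mixedSecondDiff, ← sum_boolSign_mul_boolSign_of_pairCount_eq]
  rw [← sum_prod_mul_comp_eq pairCount (fun q => boolSign q.1 * boolSign q.2),
    ← (Equiv.arrowProdEquivProdArrow ι _ _).symm.sum_comp, Fintype.sum_prod_type]
  simp only [mixedDiff, Finset.mul_sum]
  refine Fintype.sum_congr _ _ fun σ => Fintype.sum_congr _ _ fun τ => ?_
  have hpoint : (fun i => x i + ((pairCount (σ i, τ i) : ℕ) : ℝ) * h i) =
      fun i => (x i + if σ i then h i else 0) + if τ i then h i else 0 := by
    funext i
    cases σ i <;> cases τ i <;> norm_num [pairCount, two_mul, add_assoc]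
  simp [Equiv.arrowProdEquivProdArrow, Finset.prod_mul_distrib, hpoint, mul_assoc]

theorem abs_mixedSecondDiff_le {g : (ι → ℝ) → ℝ} {x h : ι → ℝ} {B : ℝ}
    (hB : ∀ σ : ι → Bool, |mixedDiff g (fun i => x i + if σ i then h i else 0) h| ≤ B) :
    |mixedSecondDiff g x h| ≤ 2 ^ Fintype.card ι * B := by
  rw [mixedSecondDiff_eq_sum_mixedDiff]
  calc _ ≤ ∑ σ : ι → Bool, |(∏ i, boolSign (σ i)) *
          mixedDiff g (fun i => x i + if σ i then h i else 0) h| :=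
        Finset.abs_sum_le_sum_abs _ _
    _ ≤ ∑ _σ : ι → Bool, B := by
        refine Finset.sum_le_sum fun σ _ => ?_
        simpa [abs_mul, Finset.abs_prod, abs_boolSign] using hB σ
    _ = 2 ^ Fintype.card ι * B := by simp

end MixedDifferences

theorem abs_mixedDiff_le_of_mixHolder {n : ℕ} {α : ℝ} {f : (Fin (n + 1) → ℝ) → ℝ}
    (hf : MixHolder (n + 1) α f) {x h : Fin (n + 1) → ℝ} (hx : ∀ i, 0 ≤ x i) (hh : ∀ i, 0 ≤ h i)
    (hxh : ∀ i, x i + h i ≤ 1) : |mixedDiff f x h| ≤ ∏ i, h i ^ α := by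
  rw [mixedDiff_eq_sum_powerset]
  exact hf univ univ_nonempty x h hh hx (by simpa using hxh)

theorem dyadic_nonneg (k : ℕ) (s : Fin (2 ^ k)) : 0 ≤ (2 : ℝ) ^ (-(k : ℝ)) * s := by
  positivity

theorem dyadic_add_two_mul_le_one (k : ℕ) (s : Fin (2 ^ k)) :
    (2 : ℝ) ^ (-(k : ℝ)) * s + 2 * (2 : ℝ) ^ (-(k : ℝ) - 1) ≤ 1 := by
  have hs : (s : ℝ) + 1 ≤ 2 ^ k := by exact_mod_cast s.isLt
  calc (2 : ℝ) ^ (-(k : ℝ)) * s + 2 * (2 : ℝ) ^ (-(k : ℝ) - 1)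
        = (2 : ℝ) ^ (-(k : ℝ)) * (s + 1) := by
        rw [Real.rpow_sub_one two_ne_zero]; ring
    _ ≤ (2 : ℝ) ^ (-(k : ℝ)) * 2 ^ k := by gcongr
    _ = 1 := by rw [Real.rpow_neg zero_le_two, Real.rpow_natCast, inv_mul_cancel₀ (by positivity)]

theorem Kfun_eq_mixedSecondDiff (e : ℕ) (α : ℝ) (f : (Fin (e + 1) → ℝ) → ℝ) (kb : Fin e → ℕ)
    (sb : (j : Fin e) → Fin (2 ^ kb j)) (t : ℝ) :
    Kfun e α f kb sb t = (-(1 : ℝ) / 2) ^ e * (∏ j, (2 : ℝ) ^ (α * ((kb j : ℝ) + 1))) *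
      mixedSecondDiff (fun z => f (Fin.cons t z)) (fun j => (2 : ℝ) ^ (-(kb j : ℝ)) * sb j)
        (fun j => (2 : ℝ) ^ (-(kb j : ℝ) - 1)) :=
  rfl

theorem Kfun_eq_zero_of_boundary {e : ℕ} {α : ℝ} {f : (Fin (e + 1) → ℝ) → ℝ}
    (hf : ∀ x ∈ Set.Icc (0 : Fin (e + 1) → ℝ) 1, (∃ i, x i = 0 ∨ x i = 1) → f x = 0)
    (kb : Fin e → ℕ) (sb : (j : Fin e) → Fin (2 ^ kb j)) {t : ℝ} (ht : t = 0 ∨ t = 1) :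
    Kfun e α f kb sb t = 0 := by
  refine mul_eq_zero_of_right _ (Finset.sum_eq_zero fun ε _ => mul_eq_zero_of_right _ ?_)
  refine hf _ ⟨fun i => ?_, fun i => ?_⟩ ⟨0, by simpa using ht⟩ <;>
    refine Fin.cases (by rcases ht with rfl | rfl <;> simp) (fun j => ?_) i
  · have hε : (0 : ℝ) ≤ (ε j : ℕ) := Nat.cast_nonneg _
    have := dyadic_nonneg (kb j) (sb j)
    simp only [Fin.cons_succ, Pi.zero_apply]
    positivity
  · have hε : ((ε j : ℕ) : ℝ) ≤ 2 := by exact_mod_cast Nat.le_of_lt_succ (ε j).isLt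
    have hstep : (0 : ℝ) < 2 ^ (-(kb j : ℝ) - 1) := by positivity
    have := dyadic_add_two_mul_le_one (kb j) (sb j)
    simp only [Fin.cons_succ, Pi.one_apply]
    nlinarith

theorem abs_mixedSecondDiff_sub_cons_le {n : ℕ} {α : ℝ} {f : (Fin (n + 1) → ℝ) → ℝ}
    (hf : MixHolder (n + 1) α f) {x h : ℝ} (hx : 0 ≤ x) (hh : 0 ≤ h) (hxh : x + h ≤ 1)
    {b δ : Fin n → ℝ} (hb : ∀ j, 0 ≤ b j) (hδ : ∀ j, 0 ≤ δ j) (hbδ : ∀ j, b j + 2 * δ j ≤ 1) :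
    |mixedSecondDiff (fun z => f (Fin.cons (x + h) z) - f (Fin.cons x z)) b δ| ≤
      2 ^ n * (h ^ α * ∏ j, δ j ^ α) := by
  simpa using abs_mixedSecondDiff_le (g := fun z => f (Fin.cons (x + h) z) - f (Fin.cons x z))
      (x := b) (h := δ) (B := h ^ α * ∏ j, δ j ^ α) fun σ => by
    rw [mixedDiff_sub, ← mixedDiff_cons]
    refine (abs_mixedDiff_le_of_mixHolder hf (fun i => ?_) (fun i => ?_) (fun i => ?_)).trans_eq
      (Fin.prod_univ_succ _) <;> refine Fin.cases (by simpa) (fun j => ?_) i <;>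
      simp only [Fin.cons_succ]
    all_goals
      have := hb j; have := hδ j; have := hbδ j
      (try split_ifs) <;> linarith

theorem abs_Kfun_const_mul_eq_one (e : ℕ) (α : ℝ) (kb : Fin e → ℕ) :
    |(-(1 : ℝ) / 2) ^ e * ∏ j, (2 : ℝ) ^ (α * ((kb j : ℝ) + 1))| *
      (2 ^ e * ∏ j, ((2 : ℝ) ^ (-(kb j : ℝ) - 1)) ^ α) = 1 := by
  have hcancel : ∀ j, (2 : ℝ) ^ (α * ((kb j : ℝ) + 1)) * ((2 : ℝ) ^ (-(kb j : ℝ) - 1)) ^ α = 1 := by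
    intro j
    rw [← Real.rpow_mul zero_le_two, ← Real.rpow_add two_pos]
    ring_nf
    exact Real.rpow_zero 2
  have hP : 0 < ∏ j, (2 : ℝ) ^ (α * ((kb j : ℝ) + 1)) := by positivity
  rw [abs_mul, abs_of_pos hP, abs_pow]
  calc |-(1 : ℝ) / 2| ^ e * (∏ j, (2 : ℝ) ^ (α * ((kb j : ℝ) + 1))) *
        (2 ^ e * ∏ j, ((2 : ℝ) ^ (-(kb j : ℝ) - 1)) ^ α)
      = (1 / 2 * 2) ^ e * ∏ j, (2 : ℝ) ^ (α * ((kb j : ℝ) + 1)) *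
          ((2 : ℝ) ^ (-(kb j : ℝ) - 1)) ^ α := by
        rw [Finset.prod_mul_distrib, mul_pow, abs_div, abs_neg, abs_one, abs_two]
        ring
    _ = 1 := by simp [hcancel]

theorem abs_Kfun_sub_le {e : ℕ} {α : ℝ} {f : (Fin (e + 1) → ℝ) → ℝ} (hf : MixHolder (e + 1) α f)
    (kb : Fin e → ℕ) (sb : (j : Fin e) → Fin (2 ^ kb j)) {x h : ℝ} (hx : 0 ≤ x) (hh : 0 ≤ h)
    (hxh : x + h ≤ 1) : |Kfun e α f kb sb (x + h) - Kfun e α f kb sb x| ≤ h ^ α := by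
  rw [Kfun_eq_mixedSecondDiff, Kfun_eq_mixedSecondDiff, ← mul_sub, ← mixedSecondDiff_sub,
    abs_mul]
  calc _ ≤ |(-(1 : ℝ) / 2) ^ e * ∏ j, (2 : ℝ) ^ (α * ((kb j : ℝ) + 1))| *
        (2 ^ e * (h ^ α * ∏ j, ((2 : ℝ) ^ (-(kb j : ℝ) - 1)) ^ α)) := by
        gcongr
        exact abs_mixedSecondDiff_sub_cons_le hf hx hh hxh (fun j => dyadic_nonneg _ _)
          (fun j => by positivity) (fun j => dyadic_add_two_mul_le_one _ _)
    _ = h ^ α := by linear_combination h ^ α * abs_Kfun_const_mul_eq_one e α kb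

theorem stmt11_general (e : ℕ) (α : ℝ)
    (f : (Fin (e + 1) → ℝ) → ℝ) (hf : UnitBallH (e + 1) α f)
    (kb : Fin e → ℕ) (sb : (j : Fin e) → Fin (2 ^ kb j)) :
    Kfun e α f kb sb 0 = 0 ∧ Kfun e α f kb sb 1 = 0 ∧
    ∀ x h : ℝ, 0 ≤ x → 0 ≤ h → x + h ≤ 1 →
      |Kfun e α f kb sb (x + h) - Kfun e α f kb sb x| ≤ h ^ α := by
  obtain ⟨-, -, hzero, hmix⟩ := hf
  exact ⟨Kfun_eq_zero_of_boundary hzero kb sb (Or.inl rfl),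
    Kfun_eq_zero_of_boundary hzero kb sb (Or.inr rfl),
    fun x h hx hh hxh => abs_Kfun_sub_le hmix kb sb hx hh hxh⟩

theorem stmt11 (e : ℕ) (he : 1 ≤ e) (α : ℝ) (hα0 : 0 < α) (hα1 : α ≤ 1)
    (m : ℕ) (hm : 1 < m) (f : (Fin (e + 1) → ℝ) → ℝ) (hf : UnitBallH (e + 1) α f)
    (kb : Fin e → ℕ) (sb : (j : Fin e) → Fin (2 ^ kb j)) :
    Kfun e α f kb sb 0 = 0 ∧ Kfun e α f kb sb 1 = 0 ∧
    ∀ x h : ℝ, 0 ≤ x → 0 ≤ h → x + h ≤ 1 →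
      |Kfun e α f kb sb (x + h) - Kfun e α f kb sb x| ≤ h ^ α :=
  stmt11_general e α f hf kb sb
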